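/- Let n = 2s be even and φ: K[y_1,…,y_n] → K[x_1,…,x_n] the map sending y_j to x_j x_{j+1} ⋯ x_{j+n-3} (the monomial of the (n−2)-path starting at j, indices mod n). Then the binomial h = ∏_{i ∈ [0,n), i odd} y_i − ∏_{i ∈ [0,n), i even} y_i lies in the kernel of φ. -/

import Mathlib

/-! Write `P = ∏ᵥ xᵥ`. The image of `yⱼ` misses exactly `x_{j-2}` and `x_{j-1}`, so
`φ(yⱼ) · x_{j-2} x_{j-1} = P`. For `n = 2m`, the pairs `{i-2, i-1}` with `i` odd partition `ℤ/n`,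
and so do those with `i` even; hence both `φ(∏_{i odd} yᵢ) · P` and `φ(∏_{i even} yᵢ) · P`
equal `P ^ m`, and `P` can be cancelled in the domain `K[x]`. -/

open MvPolynomial Finset

theorem Finset.prod_range_two_mul {M : Type*} [CommMonoid M] (g : ℕ → M) (m : ℕ) :
    ∏ i ∈ range (2 * m), g i = ∏ k ∈ range m, (g (2 * k) * g (2 * k + 1)) := by
  induction m with
  | zero => simp
  | succ m ih => rw [mul_add_one, prod_range_succ, prod_range_succ, prod_range_succ, ih, mul_assoc]

theorem Finset.prod_range_two_mul_filter_odd {M : Type*} [CommMonoid M] (g : ℕ → M) (m : ℕ) :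
    ∏ i ∈ (range (2 * m)).filter Odd, g i = ∏ k ∈ range m, g (2 * k + 1) := by
  rw [prod_filter, prod_range_two_mul]
  simp [Nat.odd_iff]

theorem Finset.prod_range_two_mul_filter_even {M : Type*} [CommMonoid M] (g : ℕ → M) (m : ℕ) :
    ∏ i ∈ (range (2 * m)).filter Even, g i = ∏ k ∈ range m, g (2 * k) := by
  rw [prod_filter, prod_range_two_mul]
  simp

namespace ZMod

variable {n : ℕ} {M : Type*} [CommMonoid M]

theorem prod_range_natCast [NeZero n] (f : ZMod n → M) :
    ∏ i ∈ range n, f i = ∏ v, f v :=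
  prod_nbij' Nat.cast val (by simp) (by simp [val_lt])
    (fun i hi => val_cast_of_lt (mem_range.1 hi)) (fun v _ => natCast_zmod_val v)
    (fun _ _ => rfl)

theorem prod_range_add_natCast [NeZero n] (f : ZMod n → M) (c : ZMod n) :
    ∏ i ∈ range n, f (c + i) = ∏ v, f v := by
  rw [prod_range_natCast (fun v => f (c + v))]
  exact Fintype.prod_equiv (Equiv.addLeft c) _ _ fun _ => rfl

def pathProd (f : ZMod n → M) (j : ZMod n) : M :=
  ∏ i ∈ range (n - 2), f (j + i)

theorem pathProd_mul [NeZero n] (hn : 2 ≤ n) (f : ZMod n → M) (j : ZMod n) :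
    pathProd f j * (f (j - 2) * f (j - 1)) = ∏ v, f v := by
  have h2 : ((n - 2 : ℕ) : ZMod n) = -2 := by
    rw [Nat.cast_sub hn, natCast_self, zero_sub, Nat.cast_ofNat]
  have h1 : ((n - 2 + 1 : ℕ) : ZMod n) = -1 := by
    rw [Nat.cast_succ, h2]; ring
  have hrange : range n = range (n - 2 + 1 + 1) := by congr 1; omega
  rw [← prod_range_add_natCast f j, hrange, prod_range_succ, prod_range_succ, h1, h2, pathProd,
    mul_assoc, sub_eq_add_neg, sub_eq_add_neg]

theorem prod_pathProd_mul [NeZero n] (m c : ℕ) (hm : n = 2 * m) (f : ZMod n → M) :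
    (∏ k ∈ range m, pathProd f ((2 * k + c : ℕ) : ZMod n)) * ∏ v, f v = (∏ v, f v) ^ m := by
  have hn : 2 ≤ n := by have := NeZero.ne n; omega
  calc (∏ k ∈ range m, pathProd f ((2 * k + c : ℕ) : ZMod n)) * ∏ v, f v
      = (∏ k ∈ range m, pathProd f ((2 * k + c : ℕ) : ZMod n)) *
          ∏ k ∈ range m, (f ((2 * k + c : ℕ) - 2) * f ((2 * k + c : ℕ) - 1)) := by
        rw [← prod_range_add_natCast f ((c : ZMod n) - 2), show range n = range (2 * m) by rw [hm],
          prod_range_two_mul]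
        congr 2 with k
        push_cast
        ring_nf
    _ = (∏ v, f v) ^ m := by
        rw [← prod_mul_distrib, prod_congr rfl fun k _ => pathProd_mul (by omega) f _, prod_const,
          card_range]

theorem prod_pathProd_odd_eq_even {M : Type*} [CommMonoidWithZero M] [IsCancelMulZero M]
    [NeZero n] (m : ℕ) (hm : n = 2 * m) (f : ZMod n → M) (hf : ∀ v, f v ≠ 0) :
    ∏ k ∈ range m, pathProd f ((2 * k + 1 : ℕ) : ZMod n) =
      ∏ k ∈ range m, pathProd f ((2 * k : ℕ) : ZMod n) :=
  have : Nontrivial M := nontrivial_of_ne _ _ (hf 0)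
  mul_right_cancel₀ (prod_ne_zero_iff.2 fun v _ => hf v)
    ((prod_pathProd_mul m 1 hm f).trans (prod_pathProd_mul m 0 hm f).symm)

end ZMod

theorem h_mem_ker_fiber_map_general (K : Type*) [Field K] (n : ℕ)
    (hev : Even n) :
    ((∏ i ∈ (Finset.range n).filter (fun i => Odd i),
        (X (i : ZMod n) : MvPolynomial (ZMod n) K))
      - ∏ i ∈ (Finset.range n).filter (fun i => Even i),
        (X (i : ZMod n) : MvPolynomial (ZMod n) K))
    ∈ RingHom.ker (aeval (R := K)
        (fun j : ZMod n =>
          ∏ i ∈ Finset.range (n - 2),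
            (X (j + (i : ZMod n)) : MvPolynomial (ZMod n) K))).toRingHom := by
  obtain ⟨m, hm⟩ := hev
  rcases eq_or_ne n 0 with rfl | hn0
  · simp
  have : NeZero n := ⟨hn0⟩
  rw [RingHom.mem_ker, AlgHom.toRingHom_eq_coe, RingHom.coe_coe, map_sub, sub_eq_zero,
    show range n = range (2 * m) by rw [hm, two_mul], prod_range_two_mul_filter_odd,
    prod_range_two_mul_filter_even, map_prod, map_prod]
  simp only [aeval_X]
  exact ZMod.prod_pathProd_odd_eq_even m (by omega) X X_ne_zero

/-- Let `n = 2s` be even and `φ : K[y_1,…,y_n] → K[x_1,…,x_n]` the map sending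
`y_j` to `x_j x_{j+1} ⋯ x_{j+n-3}` (indices mod `n`). Then the binomial
`h = ∏_{i ∈ [0,n), i odd} y_i - ∏_{i ∈ [0,n), i even} y_i` lies in the kernel
of `φ`. -/
theorem h_mem_ker_fiber_map (K : Type*) [Field K] (n : ℕ)
    (hn : 2 ≤ n) (hev : Even n) :
    ((∏ i ∈ (Finset.range n).filter (fun i => Odd i),
        (X (i : ZMod n) : MvPolynomial (ZMod n) K))
      - ∏ i ∈ (Finset.range n).filter (fun i => Even i),
        (X (i : ZMod n) : MvPolynomial (ZMod n) K))
    ∈ RingHom.ker (aeval (R := K)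
        (fun j : ZMod n =>
          ∏ i ∈ Finset.range (n - 2),
            (X (j + (i : ZMod n)) : MvPolynomial (ZMod n) K))).toRingHom :=
  h_mem_ker_fiber_map_general K n hev
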